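/- Suppose A = {Ā(i,j) : 1 ≤ i ≤ k, 1 ≤ j ≤ km} is a collection of closed annuli Ā(i,j) = Ā_{p_i}(s_{ij}, r_{ij}) in a metric space, centered at points p₁,…,p_k, with radii satisfying r_{ij} > s_{ij} > 3 r_{i(j+1)} > 3 s_{i(j+1)} for all i and all 1 ≤ j ≤ km−1. Then there exists a subcollection C ⊆ A of pairwise disjoint annuli such that for each i = 1,…,k exactly m of the annuli centered at p_i belong to C. -/

import Mathlib

/-- The closed annulus `Ā_p(s, r) = {x : s ≤ d(p,x) ≤ r}` in a metric space. -/
def closedAnnulus {M : Type*} [MetricSpace M] (p : M) (s r : ℝ) : Set M :=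
  {x | s ≤ dist p x ∧ dist p x ≤ r}

/-!
Greedy selection by increasing outer radius. Separation by the factor 3 means that an annulus of
outer radius `ρ` meets at most one annulus around a given center `p i` among those of outer
radius `≥ ρ`: if it met a smaller one `Ā(i,j')` and a larger one `Ā(i,j)`, the triangle inequality
would give `s_{ij} ≤ r_{ij'} + 2ρ ≤ 3 r_{ij'}`. So choosing the remaining annulus of smallest outer
radius and discarding every annulus it meets lowers the total demand by one and the supply around
each center by at most one. The invariant "every center whose demand is not yet met has at least as
many annuli left as the total demand" holds initially (`k * m ≥ k * m`) and hence throughout.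
-/

open Finset

section Selection

variable {α ι β : Type*} [DecidableEq ι] [LinearOrder β]
  {g : α → ι} {ρ : α → β} {R : α → α → Prop}

lemma card_filter_le_card_filter_erase_filter_add_one [DecidableEq α] [DecidableRel R]
    (hfiber : ∀ a b, g a = g b → a ≠ b → ¬R a b)
    (hle : ∀ a i, {b | g b = i ∧ ρ a ≤ ρ b ∧ R a b}.Subsingleton)
    {S : Finset α} {a : α} (ha : ∀ b ∈ S, ρ a ≤ ρ b) (i : ι) :
    #{b ∈ S | g b = i} ≤ #{b ∈ {b ∈ S.erase a | ¬R a b} | g b = i} + 1 := by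
  refine card_le_card_sdiff_add_card.trans (Nat.add_le_add_right ?_ _) |>.trans_eq (add_comm _ _)
  have hremoved : ∀ b ∈ {b ∈ S | g b = i} \ {b ∈ {b ∈ S.erase a | ¬R a b} | g b = i},
      g b = i ∧ ρ a ≤ ρ b ∧ (b = a ∨ R a b) := by
    intro b hb
    simp only [mem_sdiff, mem_filter, mem_erase] at hb
    exact ⟨hb.1.2, ha b hb.1.1, by tauto⟩
  refine card_le_one.mpr fun b hb c hc => ?_
  obtain ⟨hbi, hab, hb⟩ := hremoved b hb
  obtain ⟨hci, hac, hc⟩ := hremoved c hc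
  rcases hb with rfl | hRb <;> rcases hc with rfl | hRc
  · rfl
  · by_contra hne
    exact hfiber b c (hbi.trans hci.symm) hne hRc
  · by_contra hne
    exact hfiber c b (hci.trans hbi.symm) (Ne.symm hne) hRb
  · exact hle a i ⟨hbi, hab, hRb⟩ ⟨hci, hac, hRc⟩

lemma sum_update_sub_one_add_one [Fintype ι] {m : ι → ℕ} {i : ι} (hi : m i ≠ 0) :
    ∑ j, Function.update m i (m i - 1) j + 1 = ∑ j, m j := by
  rw [sum_update_of_mem (mem_univ _), ← sum_erase_add _ _ (mem_univ i), ← sdiff_singleton_eq_erase]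
  omega

theorem exists_subset_pairwise_of_sum_le_card_filter [Fintype ι]
    (hsymm : ∀ a b, R a b → R b a)
    (hfiber : ∀ a b, g a = g b → a ≠ b → ¬R a b)
    (hle : ∀ a i, {b | g b = i ∧ ρ a ≤ ρ b ∧ R a b}.Subsingleton)
    (S : Finset α) (m : ι → ℕ) (hS : ∀ i, 0 < m i → ∑ j, m j ≤ #{b ∈ S | g b = i}) :
    ∃ C ⊆ S, (∀ i, #{b ∈ C | g b = i} = m i) ∧ (C : Set α).Pairwise fun a b => ¬R a b := by
  classical
  induction S using Finset.strongInduction generalizing m with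
  | H S ih =>
  by_cases hm : ∀ i, m i = 0
  · exact ⟨∅, empty_subset _, fun i => by simp [hm i], by simp⟩
  obtain ⟨i₀, hi₀⟩ := not_forall.mp hm
  have hSne : S.Nonempty := by
    rw [nonempty_iff_ne_empty]
    rintro rfl
    have := (single_le_sum (fun j _ => Nat.zero_le (m j)) (mem_univ i₀)).trans
      (hS i₀ (Nat.pos_of_ne_zero hi₀))
    simp_all
  obtain ⟨a, haS, hamin⟩ := S.exists_min_image ρ hSne
  by_cases hma : m (g a) = 0
  · obtain ⟨C, hCS, hCcard, hC⟩ := ih (S.erase a) (erase_ssubset haS) m fun i hi => by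
      rw [filter_erase, erase_eq_of_notMem (by rw [mem_filter]; exact fun h => hi.ne' (h.2 ▸ hma))]
      exact hS i hi
    exact ⟨C, hCS.trans (erase_subset a S), hCcard, hC⟩
  set S' := {b ∈ S.erase a | ¬R a b}
  set m' := Function.update m (g a) (m (g a) - 1)
  have hm'le (i : ι) : m' i ≤ m i := by
    rcases eq_or_ne i (g a) with rfl | h
    · simp only [m', Function.update_self, Nat.sub_le]
    · simp only [m', Function.update_of_ne h, le_refl]
  obtain ⟨C, hCS', hCcard, hC⟩ := ih S' ((filter_subset _ _).trans_ssubset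
      (erase_ssubset haS)) m' fun i hi => by
    have : #{b ∈ S | g b = i} ≤ #{b ∈ S' | g b = i} + 1 :=
      card_filter_le_card_filter_erase_filter_add_one hfiber hle hamin i
    have := hS i (hi.trans_le (hm'le i))
    have : ∑ j, m' j + 1 = ∑ j, m j := sum_update_sub_one_add_one hma
    omega
  have haC : a ∉ C := fun h => by simpa [S'] using hCS' h
  refine ⟨insert a C, insert_subset haS (hCS'.trans ((filter_subset _ _).trans
    (erase_subset a S))), fun i => ?_, ?_⟩
  · rw [filter_insert]
    split_ifs with h
    · subst h
      rw [card_insert_of_notMem fun h => haC (mem_filter.mp h).1, hCcard]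
      simp only [m', Function.update_self]
      omega
    · rw [hCcard]
      exact Function.update_of_ne (Ne.symm h) _ _
  · rw [coe_insert, Set.pairwise_insert]
    refine ⟨hC, fun b hb _ => ?_⟩
    have hRab : ¬R a b := (mem_filter.mp (hCS' hb)).2
    exact ⟨hRab, fun h => hRab (hsymm _ _ h)⟩

lemma card_filter_fst_eq {κ : Type*} [Fintype ι] [Fintype κ] (i : ι) :
    #{x ∈ (univ : Finset (ι × κ)) | x.1 = i} = Fintype.card κ := by
  rw [show ({x ∈ univ | x.1 = i} : Finset (ι × κ)) = {i} ×ˢ univ by ext ⟨_, _⟩; simp [eq_comm]]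
  simp

end Selection

section Annuli

variable {M : Type*} [MetricSpace M]

lemma three_mul_lt_of_lt {n : ℕ} {s r : Fin n → ℝ} (hpos : ∀ j, 0 < s j)
    (hsr : ∀ j, s j < r j) (hnest : ∀ j j' : Fin n, (j : ℕ) + 1 = (j' : ℕ) → 3 * r j' < s j)
    {j j' : Fin n} (h : j < j') : 3 * r j' < s j := by
  suffices ∀ t, (j : ℕ) + 1 ≤ t → ∀ ht : t < n, 3 * r ⟨t, ht⟩ < s j from this j' h j'.isLt
  intro t hjt
  induction t, hjt using Nat.le_induction with
  | base => exact fun _ => hnest j _ rfl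
  | succ t hjt ih =>
    intro ht
    have := ih (by omega)
    have := hnest ⟨t, by omega⟩ ⟨t + 1, ht⟩ rfl
    have := hpos ⟨t, by omega⟩
    have := hsr ⟨t, by omega⟩
    linarith

lemma closedAnnulus_inter_closedAnnulus_eq_empty {p : M} {s r s' r' : ℝ} (h : r' < s) :
    closedAnnulus p s r ∩ closedAnnulus p s' r' = ∅ :=
  Set.eq_empty_of_forall_notMem fun _ hx => by linarith [hx.1.1, hx.2.2]

lemma closedAnnulus_inter_eq_empty_of_inter_nonempty {p q : M} {s r s' r' t ρ : ℝ}
    (hρ : ρ ≤ r') (h : 3 * r' < s) (hB : (closedAnnulus q t ρ ∩ closedAnnulus p s' r').Nonempty) :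
    closedAnnulus q t ρ ∩ closedAnnulus p s r = ∅ := by
  obtain ⟨x, hxq, hxp⟩ := hB
  refine Set.eq_empty_of_forall_notMem fun y ⟨hyq, hyp⟩ => ?_
  have := dist_triangle4 p x q y
  linarith [hxq.2, hxp.2, hyq.2, hyp.1, dist_comm x q]

variable {n : ℕ} {p : M} {s r : Fin n → ℝ}

lemma closedAnnulus_inter_closedAnnulus_eq_empty_of_ne (hpos : ∀ j, 0 < s j)
    (hsr : ∀ j, s j < r j) (hsep : ∀ j j' : Fin n, j < j' → 3 * r j' < s j) {j j' : Fin n}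
    (h : j ≠ j') : closedAnnulus p (s j) (r j) ∩ closedAnnulus p (s j') (r j') = ∅ := by
  rcases h.lt_or_gt with h | h
  · exact closedAnnulus_inter_closedAnnulus_eq_empty (by linarith [hsep j j' h, hpos j', hsr j'])
  · rw [Set.inter_comm]
    exact closedAnnulus_inter_closedAnnulus_eq_empty (by linarith [hsep j' j h, hpos j, hsr j])

lemma eq_of_inter_closedAnnulus_nonempty (hsep : ∀ j j' : Fin n, j < j' → 3 * r j' < s j)
    {q : M} {t ρ : ℝ} {j j' : Fin n} (hj : ρ ≤ r j) (hj' : ρ ≤ r j')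
    (h : (closedAnnulus q t ρ ∩ closedAnnulus p (s j) (r j)).Nonempty)
    (h' : (closedAnnulus q t ρ ∩ closedAnnulus p (s j') (r j')).Nonempty) : j = j' := by
  by_contra hne
  rcases Ne.lt_or_gt hne with hlt | hlt
  · exact Set.not_nonempty_iff_eq_empty.mpr
      (closedAnnulus_inter_eq_empty_of_inter_nonempty hj' (hsep j j' hlt) h') h
  · exact Set.not_nonempty_iff_eq_empty.mpr
      (closedAnnulus_inter_eq_empty_of_inter_nonempty hj (hsep j' j hlt) h) h'

end Annuli

/-- Pitts' combinatorial annuli lemma: given, for each of `k` centers `p i`, a family of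
`k*m` nested concentric closed annuli `Ā_{p i}(s i j, r i j)` whose radii satisfy
`r_{ij} > s_{ij} > 3 r_{i(j+1)} > 3 s_{i(j+1)}`, there is a subcollection of pairwise
disjoint annuli containing exactly `m` annuli around each center. -/
theorem stmt_3 {M : Type*} [MetricSpace M] (k m : ℕ) (p : Fin k → M)
    (s r : Fin k → Fin (k * m) → ℝ)
    (hpos : ∀ i j, 0 < s i j)
    (hsr : ∀ i j, s i j < r i j)
    (hnest : ∀ i : Fin k, ∀ j j' : Fin (k * m), (j : ℕ) + 1 = (j' : ℕ) →
      3 * r i j' < s i j) :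
    ∃ C : Finset (Fin k × Fin (k * m)),
      (∀ i : Fin k, (C.filter fun a => a.1 = i).card = m) ∧
      ∀ a ∈ C, ∀ b ∈ C, a ≠ b →
        closedAnnulus (p a.1) (s a.1 a.2) (r a.1 a.2) ∩
          closedAnnulus (p b.1) (s b.1 b.2) (r b.1 b.2) = ∅ := by
  have hsep i : ∀ j j', j < j' → 3 * r i j' < s i j := fun _ _ =>
    three_mul_lt_of_lt (hpos i) (hsr i) (hnest i)
  let A (a : Fin k × Fin (k * m)) := closedAnnulus (p a.1) (s a.1 a.2) (r a.1 a.2)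
  obtain ⟨C, -, hCcard, hC⟩ := exists_subset_pairwise_of_sum_le_card_filter
    (g := Prod.fst) (ρ := fun a => r a.1 a.2) (R := fun a b => (A a ∩ A b).Nonempty)
    (fun a b (h : (A a ∩ A b).Nonempty) => by rwa [Set.inter_comm] at h)
    (by
      rintro ⟨i, j⟩ ⟨_, j'⟩ rfl hne
      exact Set.not_nonempty_iff_eq_empty.mpr <| closedAnnulus_inter_closedAnnulus_eq_empty_of_ne
        (hpos i) (hsr i) (hsep i) (by simpa using hne))
    (by
      rintro a i ⟨_, j⟩ ⟨rfl, hj, hRj⟩ ⟨_, j'⟩ ⟨rfl, hj', hRj'⟩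
      simp only [Prod.mk.injEq, true_and]
      exact eq_of_inter_closedAnnulus_nonempty (hsep _) hj hj' hRj hRj')
    univ (fun _ => m) fun i _ => by simp [card_filter_fst_eq]
  exact ⟨C, hCcard, fun a ha b hb hab => Set.not_nonempty_iff_eq_empty.mp (hC ha hb hab)⟩
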